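/- Let N be a Hermitian-preserving and trace-preserving (HPTP) linear map on M_d(ℂ). Then there exist real numbers η₁ ≥ 0, η₂ ≥ 0 and CPTP maps O₁, O₂ on M_d(ℂ) such that N = η₁ O₁ − η₂ O₂. -/

import Mathlib

open scoped Kronecker ComplexOrder
open Matrix

noncomputable section

/-- `id_k ⊗ N` applied blockwise. -/
def idTensor {n m : Type*} (k : Type*)
    (N : Matrix n n ℂ → Matrix m m ℂ)
    (M : Matrix (k × n) (k × n) ℂ) : Matrix (k × m) (k × m) ℂ :=
  Matrix.of fun p q => N (Matrix.of fun a b => M (p.1, a) (q.1, b)) p.2 q.2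

/-- Trace-preserving. -/
def IsTP {n m : Type*} [Fintype n] [Fintype m]
    (N : Matrix n n ℂ → Matrix m m ℂ) : Prop :=
  ∀ X, (N X).trace = X.trace

/-- Hermitian-preserving. -/
def IsHP {n m : Type*} (N : Matrix n n ℂ → Matrix m m ℂ) : Prop :=
  ∀ X, X.IsHermitian → (N X).IsHermitian

/-- Completely positive: for every `k`, `id_k ⊗ N` preserves positive semidefiniteness. -/
def IsCP {n m : Type*} [Fintype n] [Fintype m]
    (N : Matrix n n ℂ → Matrix m m ℂ) : Prop :=
  ∀ (k : ℕ) (M : Matrix (Fin k × n) (Fin k × n) ℂ),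
    M.PosSemidef → (idTensor (Fin k) N M).PosSemidef

/-- Completely positive and trace-preserving (quantum channel). -/
def IsCPTP {n m : Type*} [Fintype n] [Fintype m]
    (N : Matrix n n ℂ → Matrix m m ℂ) : Prop :=
  IsLinearMap ℂ N ∧ IsCP N ∧ IsTP N

/-- Completely positive and trace non-increasing. -/
def IsCPTN {n m : Type*} [Fintype n] [Fintype m]
    (N : Matrix n n ℂ → Matrix m m ℂ) : Prop :=
  IsLinearMap ℂ N ∧ IsCP N ∧ ∀ X : Matrix n n ℂ, X.PosSemidef → (N X).trace ≤ X.trace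

/-- Costs of finite quasiprobability decompositions of `N` into CPTP maps. -/
def decompCosts {n m : Type*} [Fintype n] [Fintype m]
    (N : Matrix n n ℂ → Matrix m m ℂ) : Set ℝ :=
  { c | ∃ (s : ℕ) (η : Fin s → ℝ) (O : Fin s → (Matrix n n ℂ → Matrix m m ℂ)),
      (∀ i, IsCPTP (O i)) ∧ (∀ X, N X = ∑ i, (η i : ℂ) • O i X) ∧ c = ∑ i, |η i| }

/-- The physical implementability `ν(N)`. -/
noncomputable def nu {n m : Type*} [Fintype n] [Fintype m]
    (N : Matrix n n ℂ → Matrix m m ℂ) : ℝ :=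
  Real.logb 2 (sInf (decompCosts N))

/-- The Choi matrix of a linear map. -/
def choiMatrix {n m : Type*} [DecidableEq n]
    (N : Matrix n n ℂ → Matrix m m ℂ) : Matrix (n × m) (n × m) ℂ :=
  Matrix.of fun p q => N (Matrix.single p.1 q.1 1) p.2 q.2

/-- Partial trace over the second tensor factor. -/
def ptraceB {n m : Type*} [Fintype m] (J : Matrix (n × m) (n × m) ℂ) :
    Matrix n n ℂ :=
  Matrix.of fun i j => ∑ a, J (i, a) (j, a)

/-- The positive semidefinite square root, as `Matrix.PosSemidef.sqrt` was defined in older Mathlib. -/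
noncomputable def posSemidefSqrtOld {k : Type*} [Fintype k] [DecidableEq k]
    {A : Matrix k k ℂ} (hA : A.PosSemidef) : Matrix k k ℂ :=
  hA.1.eigenvectorUnitary.1 * Matrix.diagonal ((↑) ∘ (√·) ∘ hA.1.eigenvalues) *
    (star hA.1.eigenvectorUnitary : Matrix k k ℂ)

/-- The trace norm of a matrix. -/
noncomputable def traceNorm {k : Type*} [Fintype k] [DecidableEq k]
    (X : Matrix k k ℂ) : ℝ :=
  ((posSemidefSqrtOld (Matrix.posSemidef_conjTranspose_mul_self X)).trace).re

/-- Tensor product of two maps. -/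
def tensorMap {n₁ n₂ m₂ : Type*} [Fintype n₁] [DecidableEq n₁]
    (M : Matrix n₁ n₁ ℂ → Matrix n₁ n₁ ℂ) (N : Matrix n₂ n₂ ℂ → Matrix m₂ m₂ ℂ)
    (X : Matrix (n₁ × n₂) (n₁ × n₂) ℂ) : Matrix (n₁ × m₂) (n₁ × m₂) ℂ :=
  ∑ i : n₁, ∑ j : n₁,
    (M (Matrix.single i j 1)) ⊗ₖ (N (Matrix.of fun a b => X (i, a) (j, b)))

/-!
The Choi matrix `J` of a Hermitian-preserving map is Hermitian, so `J + c • 1` is positive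
semidefinite for `c = ‖J‖`. The completely depolarizing map `D` has Choi matrix `1 / d`, hence
`N + d c D` has a positive semidefinite Choi matrix and is completely positive by Choi's criterion.
It multiplies traces by `1 + d c`, so `N = (1 + d c) O₁ - d c D` with the channel
`O₁ = (N + d c D) / (1 + d c)`.
-/

section

variable {n m : Type*}

theorem IsLinearMap.add_smul {N M : Matrix n n ℂ → Matrix m m ℂ} (hN : IsLinearMap ℂ N)
    (hM : IsLinearMap ℂ M) (c : ℂ) : IsLinearMap ℂ fun X => N X + c • M X :=
  (hN.mk' + c • hM.mk').isLinear

theorem IsHP.map_conjTranspose {N : Matrix n n ℂ → Matrix m m ℂ} (hHP : IsHP N)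
    (hN : IsLinearMap ℂ N) (X : Matrix n n ℂ) : N Xᴴ = (N X)ᴴ := by
  obtain ⟨A, B, hA, hB, rfl⟩ : ∃ A B : Matrix n n ℂ, A.IsHermitian ∧ B.IsHermitian ∧
      X = A + Complex.I • B :=
    ⟨realPart X, imaginaryPart X, (realPart X).2, (imaginaryPart X).2,
      (realPart_add_I_smul_imaginaryPart X).symm⟩
  simp [hN.map_add, hN.map_smul, hN.map_neg, hA.eq, hB.eq, (hHP A hA).eq, (hHP B hB).eq]

theorem IsCP.real_smul [Fintype n] [Fintype m] {N : Matrix n n ℂ → Matrix m m ℂ} (hN : IsCP N)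
    {r : ℝ} (hr : 0 ≤ r) : IsCP fun X => (r : ℂ) • N X := by
  intro k M hM
  have hsmul : idTensor (Fin k) (fun X => (r : ℂ) • N X) M = (r : ℂ) • idTensor (Fin k) N M := by
    ext
    simp [idTensor]
  rw [hsmul]
  exact (hN k M hM).smul (Complex.zero_le_real.mpr hr)

variable [DecidableEq n]

theorem choiMatrix_add_smul (N M : Matrix n n ℂ → Matrix m m ℂ) (c : ℂ) :
    choiMatrix (fun X => N X + c • M X) = choiMatrix N + c • choiMatrix M :=
  rfl

theorem IsHP.isHermitian_choiMatrix {N : Matrix n n ℂ → Matrix m m ℂ} (hHP : IsHP N)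
    (hN : IsLinearMap ℂ N) : (choiMatrix N).IsHermitian := by
  ext ⟨a, i⟩ ⟨b, j⟩
  rw [conjTranspose_apply]
  simp only [choiMatrix, of_apply]
  rw [← conjTranspose_apply, ← hHP.map_conjTranspose hN, conjTranspose_single, star_one]

variable [Fintype n]

theorem IsLinearMap.apply_eq_sum_choiMatrix {N : Matrix n n ℂ → Matrix m m ℂ}
    (hN : IsLinearMap ℂ N) (X : Matrix n n ℂ) (i j : m) :
    N X i j = ∑ a, ∑ b, X a b * choiMatrix N (a, i) (b, j) := by
  have hX : X = ∑ a, ∑ b, X a b • single a b (1 : ℂ) := by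
    simpa using matrix_eq_sum_single X
  rw [← hN.mk'_apply]
  conv_lhs => rw [hX]
  simp only [map_sum]
  simp only [hN.mk'_apply, hN.map_smul, Matrix.sum_apply, Matrix.smul_apply, choiMatrix, of_apply,
    smul_eq_mul]

variable [Fintype m] [DecidableEq m]

def fibreSum (k n m : Type*) [DecidableEq k] [DecidableEq m] : Matrix (k × n × m) (k × m) ℂ :=
  Matrix.of fun x y => if (x.1, x.2.2) = y then 1 else 0

/-- `id_k ⊗ N` compresses the Hadamard product of `M` and the Choi matrix of `N`, both pulled back
to `k × n × m`; with the Schur product theorem this yields Choi's criterion. -/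
theorem idTensor_eq_fibreSum {k : Type*} [Fintype k] [DecidableEq k]
    {N : Matrix n n ℂ → Matrix m m ℂ} (hN : IsLinearMap ℂ N) (M : Matrix (k × n) (k × n) ℂ) :
    idTensor k N M = (fibreSum k n m)ᴴ *
      (M.submatrix (fun x => (x.1, x.2.1)) (fun x => (x.1, x.2.1)) ⊙
        (choiMatrix N).submatrix Prod.snd Prod.snd) * fibreSum k n m := by
  ext ⟨c, i⟩ ⟨c', j⟩
  simp only [idTensor, hN.apply_eq_sum_choiMatrix, of_apply, fibreSum, mul_apply,
    conjTranspose_apply, Prod.mk.injEq, ite_and, RCLike.star_def, apply_ite (starRingEnd ℂ),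
    map_one, map_zero, hadamard_apply, submatrix_apply, ite_mul, one_mul, zero_mul,
    Fintype.sum_prod_type, Finset.sum_ite_irrel, Finset.sum_ite_eq', Finset.mem_univ, ↓reduceIte,
    Finset.sum_const_zero, mul_ite, mul_one, mul_zero]
  exact Finset.sum_comm

theorem isCP_of_posSemidef_choiMatrix {N : Matrix n n ℂ → Matrix m m ℂ} (hN : IsLinearMap ℂ N)
    (hJ : (choiMatrix N).PosSemidef) : IsCP N := by
  intro k M hM
  rw [idTensor_eq_fibreSum hN]
  exact ((hM.submatrix _).hadamard (hJ.submatrix _)).conjTranspose_mul_mul_same _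

end

open scoped Matrix.Norms.L2Operator MatrixOrder in
theorem Matrix.IsHermitian.exists_posSemidef_add_smul_one {ι : Type*} [Fintype ι]
    [DecidableEq ι] {A : Matrix ι ι ℂ} (hA : A.IsHermitian) :
    ∃ c : ℝ, 0 ≤ c ∧ (A + (c : ℂ) • 1).PosSemidef := by
  refine ⟨‖A‖, norm_nonneg A, ?_⟩
  have hle := IsSelfAdjoint.neg_algebraMap_norm_le_self hA
  rw [Algebra.algebraMap_eq_smul_one, neg_le_iff_add_nonneg] at hle
  rw [← nonneg_iff_posSemidef]
  simpa [← Complex.coe_smul] using hle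

section Depolarizing

variable {n m : Type*} [Fintype n] [Fintype m] [DecidableEq m]

variable (n m) in
def depolarizing (X : Matrix n n ℂ) : Matrix m m ℂ :=
  (X.trace / Fintype.card m) • 1

theorem isLinearMap_depolarizing : IsLinearMap ℂ (depolarizing n m) where
  map_add X Y := by simp [depolarizing, add_div, add_smul]
  map_smul c X := by simp [depolarizing, mul_div_assoc, smul_smul]

theorem isTP_depolarizing : IsTP (depolarizing m m) := by
  intro X
  rcases isEmpty_or_nonempty m with hm | hm
  · simp [trace]
  · simp [depolarizing]

variable [DecidableEq n]

theorem choiMatrix_depolarizing :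
    choiMatrix (depolarizing n m) = ((Fintype.card m : ℂ)⁻¹) • 1 := by
  ext ⟨a, i⟩ ⟨b, j⟩
  rcases eq_or_ne a b with rfl | hab
  · simp [choiMatrix, depolarizing, one_apply, trace_single_eq_same]
  · simp [choiMatrix, depolarizing, one_apply, trace_single_eq_of_ne (h := hab), hab]

theorem isCPTP_depolarizing : IsCPTP (depolarizing n n) := by
  refine ⟨isLinearMap_depolarizing, isCP_of_posSemidef_choiMatrix isLinearMap_depolarizing ?_,
    isTP_depolarizing⟩
  rw [choiMatrix_depolarizing]
  exact PosSemidef.one.smul (by positivity)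

theorem IsHP.exists_isCP_add_smul_depolarizing {N : Matrix n n ℂ → Matrix m m ℂ} (hHP : IsHP N)
    (hN : IsLinearMap ℂ N) :
    ∃ c : ℝ, 0 ≤ c ∧ IsCP fun X => N X + (c : ℂ) • depolarizing n m X := by
  obtain ⟨c, hc, hJ⟩ := (hHP.isHermitian_choiMatrix hN).exists_posSemidef_add_smul_one
  refine ⟨Fintype.card m * c, by positivity,
    isCP_of_posSemidef_choiMatrix (hN.add_smul isLinearMap_depolarizing _) ?_⟩
  -- `(card m)⁻¹ = 0` for empty `m`, but then the Choi matrix has an empty index type.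
  rcases isEmpty_or_nonempty m with hm | hm
  · rw [Subsingleton.elim (choiMatrix _) 0]
    exact PosSemidef.zero
  rw [choiMatrix_add_smul, choiMatrix_depolarizing, smul_smul]
  convert hJ using 3
  push_cast
  field_simp

end Depolarizing

theorem IsCP.isCPTP_inv_smul {n : Type*} [Fintype n] {N : Matrix n n ℂ → Matrix n n ℂ}
    (hCP : IsCP N) (hN : IsLinearMap ℂ N) {r : ℝ} (hr : 0 < r)
    (htr : ∀ X, (N X).trace = r * X.trace) : IsCPTP fun X => ((r⁻¹ : ℝ) : ℂ) • N X := by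
  refine ⟨(((r⁻¹ : ℝ) : ℂ) • hN.mk').isLinear, hCP.real_smul (by positivity), fun X => ?_⟩
  rw [trace_smul, htr, smul_eq_mul, ← mul_assoc, ← Complex.ofReal_mul, inv_mul_cancel₀ hr.ne',
    Complex.ofReal_one, one_mul]

/-- every HPTP map is a difference of two nonnegatively scaled CPTP maps. -/
theorem hptp_decomposes_into_two_cptp {d : ℕ}
    (N : Matrix (Fin d) (Fin d) ℂ → Matrix (Fin d) (Fin d) ℂ)
    (hlin : IsLinearMap ℂ N) (hHP : IsHP N) (hTP : IsTP N) :
    ∃ (η₁ η₂ : ℝ) (O₁ O₂ : Matrix (Fin d) (Fin d) ℂ → Matrix (Fin d) (Fin d) ℂ),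
      0 ≤ η₁ ∧ 0 ≤ η₂ ∧ IsCPTP O₁ ∧ IsCPTP O₂ ∧
      ∀ X, N X = (η₁ : ℂ) • O₁ X - (η₂ : ℂ) • O₂ X := by
  obtain ⟨c, hc, hCP⟩ := hHP.exists_isCP_add_smul_depolarizing hlin
  set D := depolarizing (Fin d) (Fin d)
  have hpos : 0 < 1 + c := by positivity
  have htr (X : Matrix (Fin d) (Fin d) ℂ) :
      (N X + (c : ℂ) • D X).trace = ((1 + c : ℝ) : ℂ) * X.trace := by
    rw [trace_add, trace_smul, hTP, isTP_depolarizing, smul_eq_mul]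
    push_cast
    ring
  refine ⟨1 + c, c, _, D, hpos.le, hc,
    hCP.isCPTP_inv_smul (hlin.add_smul isLinearMap_depolarizing _) hpos htr,
    isCPTP_depolarizing, fun X => ?_⟩
  rw [smul_smul, ← Complex.ofReal_mul, mul_inv_cancel₀ hpos.ne', Complex.ofReal_one, one_smul,
    add_sub_cancel_right]

end
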